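/- arXiv:2403.00399 — 2 statements merged into one kernel-verified Lean document; each statement's English description precedes it below -/
import Mathlib

section
/- In the two-player setting (players 0 and 1) with vertex set V, maximum edge weight W, and initial vertex v_0, let c ∈ ℕ. If there exists a c-witness, then there exists a c-witness π′ such that either cost_1(π′) = +∞ or cost_1(π′) ≤ 2·|V|·W. -/
open scoped Classical

/-- An infinite play in the graph with edge relation `E`. -/
def IsPlay {V : Type*} (E : V → V → Prop) (π : ℕ → V) : Prop :=
  ∀ k, E (π k) (π (k + 1))

/-- The history `π 0, …, π k` as a list. -/
def histList {V : Type*} (π : ℕ → V) (k : ℕ) : List V :=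
  (List.range (k + 1)).map π

/-- The accumulated weight of the first `n` edges of `π`. -/
def pathWeight {V : Type*} (w : V → V → ℕ) (π : ℕ → V) (n : ℕ) : ℕ :=
  ∑ j ∈ Finset.range n, w (π j) (π (j + 1))

/-- The cost of a play for weight function `w` and target set `T` : the accumulated
weight up to the first visit of `T`, and `+∞` if `T` is never visited. -/
noncomputable def cost {V : Type*} (w : V → V → ℕ) (T : Set V) (π : ℕ → V) : ℕ∞ :=
  if h : ∃ n, π n ∈ T then (pathWeight w π (Nat.find h) : ℕ∞) else ⊤

/-- `σ` is a strategy for the player owning the set of vertices `Vi`. -/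
def IsStrategy {V : Type*} (E : V → V → Prop) (Vi : Set V) (σ : List V → V) : Prop :=
  ∀ (l : List V) (u : V), List.Chain' E (l ++ [u]) → u ∈ Vi → E u (σ (l ++ [u]))

/-- A play is consistent with the strategy `σ` of the player owning `Vi`. -/
def PlayConsistent {V : Type*} (Vi : Set V) (σ : List V → V) (π : ℕ → V) : Prop :=
  ∀ k, π k ∈ Vi → π (k + 1) = σ (histList π k)


/-- In the two-player setting (player 0 owns `V0`, player 1 owns `V0ᶜ`), the play `π`
is the outcome of a `σ0`-fixed Nash equilibrium: for some strategy `σ1` of player 1,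
`π` is the outcome of `(σ0, σ1)` from `v0` and player 1 has no profitable deviation. -/
def NEOutcome2 {V : Type*} (E : V → V → Prop) (V0 : Set V) (v0 : V)
    (w1 : V → V → ℕ) (T1 : Set V) (σ0 : List V → V) (π : ℕ → V) : Prop :=
  ∃ σ1 : List V → V, IsStrategy E V0ᶜ σ1 ∧
    IsPlay E π ∧ π 0 = v0 ∧ PlayConsistent V0 σ0 π ∧ PlayConsistent V0ᶜ σ1 π ∧
    ∀ τ1 : List V → V, IsStrategy E V0ᶜ τ1 →
      ∀ π' : ℕ → V, IsPlay E π' → π' 0 = v0 →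
        PlayConsistent V0 σ0 π' → PlayConsistent V0ᶜ τ1 π' →
        cost w1 T1 π ≤ cost w1 T1 π'

/-- The play `h · ρ` obtained by concatenating the history `h` with the play `ρ`. -/
def concatPlay {V : Type*} (h : List V) (ρ : ℕ → V) : ℕ → V := fun k =>
  if hk : k < h.length then h.get ⟨k, hk⟩ else ρ (k - h.length)

/-- Player 0 (owning `V0`) wins from `v` for the objective `Ω`. -/
def Player0Wins {V : Type*} (E : V → V → Prop) (V0 : Set V) (v : V)
    (Ω : (ℕ → V) → Prop) : Prop :=
  ∃ σ : List V → V, IsStrategy E V0 σ ∧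
    ∀ ρ, IsPlay E ρ → ρ 0 = v → PlayConsistent V0 σ ρ → Ω ρ

/-- `π` is a `c`-witness: a play from `v0` with `cost₀ π ≤ c` such that, with
`d = cost₁ π`, for every deviation `hv` of `π` (where `last h = π m` is owned by
player 1), player 0 wins from `v` for the objective
`cost₀(h·ρ) ≤ c or cost₁(h·ρ) > d`. -/
def IsCWitness {V : Type*} (E : V → V → Prop) (V0 : Set V) (v0 : V)
    (w0 w1 : V → V → ℕ) (T0 T1 : Set V) (c : ℕ) (π : ℕ → V) : Prop :=
  IsPlay E π ∧ π 0 = v0 ∧ cost w0 T0 π ≤ (c : ℕ∞) ∧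
    ∀ (m : ℕ) (v : V), π m ∉ V0 → E (π m) v → v ≠ π (m + 1) →
      Player0Wins E V0 v (fun ρ =>
        cost w0 T0 (concatPlay (histList π m) ρ) ≤ (c : ℕ∞) ∨
        cost w1 T1 π < cost w1 T1 (concatPlay (histList π m) ρ))

/-!
Take a `c`-witness whose first visit to `T₁` happens as early as possible, at step `N`, and let
`n₀` be its first visit to `T₀`. A loop `π i = π j` with `i < j ≤ N` lying entirely before or
entirely after `n₀` can be cut out: player 0's cost stays at most `c`, player 1's cost drops by
the weight of the loop, and a deviation from the shortened play is a deviation from the original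
one whose outcomes, after the same loop is cut from them, have their costs changed in the same
way. Minimality of `N` therefore makes `π` injective on `[0, min n₀ N]` and on `[n₀, N]`, so
`N ≤ 2|V|` and player 1's cost is at most `N W ≤ 2|V|W`.
-/

section CutLoop

variable {V : Type*}

def IsFirstVisit (T : Set V) (π : ℕ → V) (n : ℕ) : Prop :=
  π n ∈ T ∧ ∀ k < n, π k ∉ T

/-- The play `π` with the segment `π (i + 1), …, π j` cut out; a play again when `π i = π j`. -/
def cutLoop (π : ℕ → V) (i j : ℕ) : ℕ → V := fun k =>
  if k < i then π k else π (k + (j - i))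

section Paths

variable {π : ℕ → V} {w : V → V → ℕ} {T : Set V} {i j k n : ℕ}

theorem exists_isFirstVisit (h : ∃ n, π n ∈ T) : ∃ n, IsFirstVisit T π n :=
  ⟨Nat.find h, Nat.find_spec h, fun _ => Nat.find_min h⟩

theorem cutLoop_apply_of_lt (hk : k < i) : cutLoop π i j k = π k := by
  simp [cutLoop, hk]

theorem cutLoop_apply_of_ge (hk : i ≤ k) : cutLoop π i j k = π (k + (j - i)) := by
  simp [cutLoop, Nat.not_lt.2 hk]

theorem cutLoop_apply_of_le (hij : π i = π j) (hlt : i ≤ j) (hk : k ≤ i) :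
    cutLoop π i j k = π k := by
  rcases hk.lt_or_eq with hk | rfl
  · exact cutLoop_apply_of_lt hk
  · rw [cutLoop_apply_of_ge le_rfl, Nat.add_sub_cancel' hlt, hij]

theorem IsPlay.cutLoop {E : V → V → Prop} (hπ : IsPlay E π) (hlt : i < j) (hij : π i = π j) :
    IsPlay E (cutLoop π i j) := by
  intro k
  rcases Nat.lt_or_ge k i with hk | hk
  · rw [cutLoop_apply_of_lt hk, cutLoop_apply_of_le hij hlt.le hk]
    exact hπ k
  · rw [cutLoop_apply_of_ge hk, cutLoop_apply_of_ge (by omega),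
      show k + 1 + (j - i) = k + (j - i) + 1 by omega]
    exact hπ _

theorem IsFirstVisit.cutLoop (h : IsFirstVisit T π n) (hij : i ≤ j) (hjn : j ≤ n) :
    IsFirstVisit T (cutLoop π i j) (n - (j - i)) := by
  refine ⟨?_, fun k hk => ?_⟩
  · rw [cutLoop_apply_of_ge (by omega), Nat.sub_add_cancel (by omega)]
    exact h.1
  · rcases Nat.lt_or_ge k i with hki | hki
    · rw [cutLoop_apply_of_lt hki]
      exact h.2 k (by omega)
    · rw [cutLoop_apply_of_ge hki]
      exact h.2 _ (by omega)

theorem pathWeight_congr {p q : ℕ → V} (h : ∀ k ≤ n, p k = q k) :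
    pathWeight w p n = pathWeight w q n :=
  Finset.sum_congr rfl fun k hk => by
    rw [h k (by simp at hk; omega), h (k + 1) (by simp at hk; omega)]

theorem pathWeight_succ :
    pathWeight w π (n + 1) = pathWeight w π n + w (π n) (π (n + 1)) :=
  Finset.sum_range_succ _ _

theorem pathWeight_mono (h : k ≤ n) : pathWeight w π k ≤ pathWeight w π n :=
  Finset.sum_le_sum_of_subset (Finset.range_subset_range.2 h)

theorem pathWeight_le_mul {E : V → V → Prop} {W : ℕ} (hπ : IsPlay E π)
    (hW : ∀ u v, E u v → w u v ≤ W) : pathWeight w π n ≤ n * W := by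
  calc pathWeight w π n ≤ ∑ _k ∈ Finset.range n, W := Finset.sum_le_sum fun k _ => hW _ _ (hπ k)
    _ = n * W := by simp

theorem pathWeight_cutLoop_add (hlt : i < j) (hij : π i = π j) (hn : i ≤ n) :
    pathWeight w (cutLoop π i j) n + pathWeight w π j =
      pathWeight w π (n + (j - i)) + pathWeight w π i := by
  induction n, hn using Nat.le_induction with
  | base =>
    rw [pathWeight_congr fun k hk => cutLoop_apply_of_le hij hlt.le hk,
      Nat.add_sub_cancel' hlt.le, add_comm]
  | succ n hn ih =>
    rw [pathWeight_succ, cutLoop_apply_of_ge hn, cutLoop_apply_of_ge (by omega),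
      show n + 1 + (j - i) = n + (j - i) + 1 by omega, pathWeight_succ]
    omega

theorem IsFirstVisit.cost_eq (h : IsFirstVisit T π n) : cost w T π = pathWeight w π n := by
  have hex : ∃ m, π m ∈ T := ⟨n, h.1⟩
  rw [cost, dif_pos hex, (Nat.find_eq_iff hex).2 h]

theorem cost_eq_top_iff : cost w T π = ⊤ ↔ ∀ n, π n ∉ T := by
  by_cases hex : ∃ n, π n ∈ T
  · simp [cost, hex]
  · simp [cost, not_exists.1 hex]

theorem cost_eq_of_eqOn {p q : ℕ → V} (h : ∀ k ≤ n, p k = q k) (hn : p n ∈ T) :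
    cost w T p = cost w T q := by
  obtain ⟨m, hm⟩ := exists_isFirstVisit ⟨n, hn⟩
  have hmn : m ≤ n := by
    by_contra! hnm
    exact hm.2 n hnm hn
  have hqm : IsFirstVisit T q m :=
    ⟨h m hmn ▸ hm.1, fun k hk => h k (by omega) ▸ hm.2 k hk⟩
  rw [hm.cost_eq, hqm.cost_eq, pathWeight_congr fun k hk => h k (hk.trans hmn)]

theorem cost_cutLoop_add (hlt : i < j) (hij : π i = π j) (hT : ∀ k < j, π k ∉ T) :
    cost w T (cutLoop π i j) + pathWeight w π j = cost w T π + pathWeight w π i := by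
  by_cases hex : ∃ n, π n ∈ T
  · obtain ⟨n, hn⟩ := exists_isFirstVisit hex
    have hjn : j ≤ n := by
      by_contra! hnj
      exact hT n hnj hn.1
    rw [hn.cost_eq, (hn.cutLoop hlt.le hjn).cost_eq, ← Nat.cast_add, ← Nat.cast_add,
      pathWeight_cutLoop_add hlt hij (by omega), Nat.sub_add_cancel (by omega)]
  · have hcut : ∀ k, cutLoop π i j k ∉ T := fun k => by
      rcases Nat.lt_or_ge k i with hk | hk
      · rw [cutLoop_apply_of_lt hk]; exact fun h => hex ⟨k, h⟩
      · rw [cutLoop_apply_of_ge hk]; exact fun h => hex ⟨_, h⟩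
    rw [cost_eq_top_iff.2 hcut, cost_eq_top_iff.2 (not_exists.1 hex), top_add, top_add]

/-- Cutting a loop does not increase the cost, unless the target is first reached inside it. -/
theorem cost_cutLoop_le (hlt : i < j) (hij : π i = π j)
    (hT : (∀ k < j, π k ∉ T) ∨ ∃ k ≤ i, π k ∈ T) :
    cost w T (cutLoop π i j) ≤ cost w T π := by
  rcases hT with hT | ⟨k, hki, hk⟩
  · have hweight : (pathWeight w π i : ℕ∞) ≤ pathWeight w π j := by
      exact_mod_cast pathWeight_mono hlt.le
    refine (ENat.add_le_add_iff_right (ENat.natCast_ne_top (pathWeight w π i))).1 ?_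
    calc cost w T (cutLoop π i j) + pathWeight w π i
        ≤ cost w T (cutLoop π i j) + pathWeight w π j := by gcongr
      _ = cost w T π + pathWeight w π i := cost_cutLoop_add hlt hij hT
  · exact (cost_eq_of_eqOn (fun l hl => (cutLoop_apply_of_le hij hlt.le (hl.trans hki)).symm)
      hk).ge

theorem cost_cutLoop_lt_cost_cutLoop {p q : ℕ → V} (hlt : i < j) (hij : p i = p j)
    (hpq : ∀ k ≤ j, p k = q k) (hT : ∀ k < j, p k ∉ T) (h : cost w T p < cost w T q) :
    cost w T (cutLoop p i j) < cost w T (cutLoop q i j) := by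
  have hTq : ∀ k < j, q k ∉ T := fun k hk => hpq k hk.le ▸ hT k hk
  have hj : pathWeight w p j = pathWeight w q j := pathWeight_congr hpq
  have hi : pathWeight w p i = pathWeight w q i := pathWeight_congr fun k hk => hpq k (by omega)
  have hp := cost_cutLoop_add (w := w) hlt hij hT
  have hq := cost_cutLoop_add (w := w) hlt (hpq i hlt.le ▸ hpq j le_rfl ▸ hij) hTq
  rw [hj, hi] at hp
  refine (ENat.add_lt_add_iff_right (ENat.natCast_ne_top (pathWeight w q j))).1 ?_
  rw [hp, hq]
  exact (ENat.add_lt_add_iff_right (ENat.natCast_ne_top _)).2 h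

end Paths

section Histories

variable {π ρ : ℕ → V} {i j k m : ℕ}

theorem length_histList : (histList π m).length = m + 1 := by
  simp [histList]

theorem concatPlay_histList_of_le (hk : k ≤ m) : concatPlay (histList π m) ρ k = π k := by
  simp [concatPlay, histList, Nat.lt_succ_of_le hk]

theorem concatPlay_histList_of_lt (hk : m < k) :
    concatPlay (histList π m) ρ k = ρ (k - (m + 1)) := by
  rw [concatPlay, dif_neg (by rw [length_histList]; omega), length_histList]

theorem histList_congr {π' : ℕ → V} (h : ∀ k ≤ m, π k = π' k) : histList π m = histList π' m :=
  List.map_congr_left fun k hk => h k (by simp at hk; omega)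

theorem concatPlay_histList_cutLoop (hij : π i = π j) (hlt : i ≤ j) (him : i ≤ m) :
    concatPlay (histList (cutLoop π i j) m) ρ =
      cutLoop (concatPlay (histList π (m + (j - i))) ρ) i j := by
  funext k
  rcases Nat.lt_or_ge k i with hki | hki
  · rw [cutLoop_apply_of_lt hki, concatPlay_histList_of_le (by omega),
      concatPlay_histList_of_le (by omega), cutLoop_apply_of_le hij hlt hki.le]
  rw [cutLoop_apply_of_ge hki]
  rcases le_or_gt k m with hkm | hmk
  · rw [concatPlay_histList_of_le hkm, concatPlay_histList_of_le (by omega),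
      cutLoop_apply_of_ge hki]
  · rw [concatPlay_histList_of_lt hmk, concatPlay_histList_of_lt (by omega),
      show k + (j - i) - (m + (j - i) + 1) = k - (m + 1) by omega]

end Histories

theorem succ_sub_le_card_of_ne [Fintype V] {π : ℕ → V} {a b : ℕ}
    (h : ∀ i j, a ≤ i → i < j → j ≤ b → π i ≠ π j) : b + 1 - a ≤ Fintype.card V := by
  have hinj : Set.InjOn π (Finset.Icc a b) := by
    intro x hx y hy hxy
    simp only [Finset.coe_Icc, Set.mem_Icc] at hx hy
    by_contra hne
    rcases Nat.lt_or_gt_of_ne hne with hlt | hlt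
    · exact h x y hx.1 hlt hy.2 hxy
    · exact h y x hy.1 hlt hx.2 hxy.symm
  simpa using Finset.card_le_card_of_injOn π (fun _ _ => Finset.mem_univ _) hinj

theorem le_two_mul_card_of_no_loop [Fintype V] {π : ℕ → V} {n N : ℕ}
    (h : ∀ i j, i < j → j ≤ N → (j ≤ n ∨ n ≤ i) → π i ≠ π j) : N ≤ 2 * Fintype.card V := by
  have hpre := succ_sub_le_card_of_ne (π := π) (a := 0) (b := min n N)
    fun i j _ hij hj => h i j hij (by omega) (by omega)
  have hpost := succ_sub_le_card_of_ne (π := π) (a := n) (b := N)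
    fun i j hi hij hj => h i j hij hj (Or.inr hi)
  omega

section Witness

variable {E : V → V → Prop} {V0 : Set V} {v0 : V} {w0 w1 : V → V → ℕ} {T0 T1 : Set V}
  {c : ℕ} {π : ℕ → V} {i j : ℕ}

/-- A deviation from the shortened play at step `m ≥ i` is the deviation at step
`m + (j - i)` of `π`, and its outcomes are those of `π`'s deviation with the loop cut out. -/
theorem IsCWitness.cutLoop (hπ : IsCWitness E V0 v0 w0 w1 T0 T1 c π) (hlt : i < j)
    (hij : π i = π j) (hT1 : ∀ k < j, π k ∉ T1)
    (hT0 : (∀ k < j, π k ∉ T0) ∨ ∃ k ≤ i, π k ∈ T0) :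
    IsCWitness E V0 v0 w0 w1 T0 T1 c (cutLoop π i j) := by
  obtain ⟨hplay, hπ0, hcost, hdev⟩ := hπ
  have hprefix : ∀ k ≤ i, _root_.cutLoop π i j k = π k :=
    fun k hk => cutLoop_apply_of_le hij hlt.le hk
  refine ⟨hplay.cutLoop hlt hij, (hprefix 0 (Nat.zero_le _)).trans hπ0,
    (cost_cutLoop_le hlt hij hT0).trans hcost, fun m v hm hv hne => ?_⟩
  rcases Nat.lt_or_ge m i with hmi | hmi
  · rw [hprefix m hmi.le] at hm hv
    rw [hprefix (m + 1) hmi] at hne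
    obtain ⟨σ, hσ, hwin⟩ := hdev m v hm hv hne
    refine ⟨σ, hσ, fun ρ hρ hρ0 hρσ => ?_⟩
    rw [histList_congr fun k hk => hprefix k (by omega)]
    exact (hwin ρ hρ hρ0 hρσ).imp_right (cost_cutLoop_le hlt hij (Or.inl hT1)).trans_lt
  · rw [cutLoop_apply_of_ge hmi] at hm hv
    rw [cutLoop_apply_of_ge (by omega), show m + 1 + (j - i) = m + (j - i) + 1 by omega] at hne
    obtain ⟨σ, hσ, hwin⟩ := hdev _ v hm hv hne
    refine ⟨σ, hσ, fun ρ hρ hρ0 hρσ => ?_⟩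
    set P := concatPlay (histList π (m + (j - i))) ρ
    have hP : ∀ k ≤ j, π k = P k := fun k hk => (concatPlay_histList_of_le (by omega)).symm
    have hT0P : (∀ k < j, P k ∉ T0) ∨ ∃ k ≤ i, P k ∈ T0 :=
      hT0.imp (fun h k hk => hP k hk.le ▸ h k hk)
        fun ⟨k, hki, hk⟩ => ⟨k, hki, hP k (by omega) ▸ hk⟩
    rw [concatPlay_histList_cutLoop hij hlt.le hmi]
    have hPloop : P i = P j := (hP i hlt.le).symm.trans (hij.trans (hP j le_rfl))
    exact (hwin ρ hρ hρ0 hρσ).imp (cost_cutLoop_le hlt hPloop hT0P).trans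
      (cost_cutLoop_lt_cost_cutLoop hlt hij hP hT1)

theorem exists_isCWitness_cost_le [Fintype V] {W : ℕ} (hW1 : ∀ u v, E u v → w1 u v ≤ W)
    (hπ : IsCWitness E V0 v0 w0 w1 T0 T1 c π) (hT1 : ∃ n, π n ∈ T1) :
    ∃ π', IsCWitness E V0 v0 w0 w1 T0 T1 c π' ∧
      cost w1 T1 π' ≤ (2 * Fintype.card V * W : ℕ) := by
  have hex : ∃ N π, IsCWitness E V0 v0 w0 w1 T0 T1 c π ∧ IsFirstVisit T1 π N := by
    obtain ⟨N, hN⟩ := exists_isFirstVisit hT1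
    exact ⟨N, π, hπ, hN⟩
  obtain ⟨π, hπ, hN⟩ := Nat.find_spec hex
  set N := Nat.find hex
  have hvisit : ∃ n, π n ∈ T0 := by
    by_contra! hnone
    exact (hπ.2.2.1.trans_lt (ENat.natCast_lt_top c)).ne (cost_eq_top_iff.2 hnone)
  obtain ⟨n, hn⟩ := exists_isFirstVisit hvisit
  have hloop : ∀ i j, i < j → j ≤ N → (j ≤ n ∨ n ≤ i) → π i ≠ π j := by
    intro i j hlt hjN hside hij
    have hT0 : (∀ k < j, π k ∉ T0) ∨ ∃ k ≤ i, π k ∈ T0 :=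
      hside.imp (fun h k hk => hn.2 k (by omega)) fun h => ⟨n, h, hn.1⟩
    exact Nat.find_min hex (show N - (j - i) < N by omega)
      ⟨_, hπ.cutLoop hlt hij (fun k hk => hN.2 k (by omega)) hT0, hN.cutLoop hlt.le hjN⟩
  refine ⟨π, hπ, ?_⟩
  calc cost w1 T1 π = pathWeight w1 π N := hN.cost_eq
    _ ≤ (N * W : ℕ) := by exact_mod_cast pathWeight_le_mul hπ.1 hW1
    _ ≤ (2 * Fintype.card V * W : ℕ) := by
      exact_mod_cast Nat.mul_le_mul_right W (le_two_mul_card_of_no_loop hloop)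

end Witness

end CutLoop

theorem cwitness_bound_general {V : Type*} [Fintype V] (E : V → V → Prop)
    (V0 : Set V) (v0 : V)
    (w0 w1 : V → V → ℕ) (T0 T1 : Set V) (W : ℕ)
    (hW1 : ∀ u v, E u v → w1 u v ≤ W) (c : ℕ)
    (h : ∃ π : ℕ → V, IsCWitness E V0 v0 w0 w1 T0 T1 c π) :
    ∃ π' : ℕ → V, IsCWitness E V0 v0 w0 w1 T0 T1 c π' ∧
      (cost w1 T1 π' = ⊤ ∨ cost w1 T1 π' ≤ (2 * Fintype.card V * W : ℕ)) := by
  obtain ⟨π, hπ⟩ := h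
  by_cases hT1 : ∃ n, π n ∈ T1
  · obtain ⟨π', hπ', hcost⟩ := exists_isCWitness_cost_le hW1 hπ hT1
    exact ⟨π', hπ', Or.inr hcost⟩
  · exact ⟨π, hπ, Or.inl (cost_eq_top_iff.2 (not_exists.1 hT1))⟩

/-- If there is a `c`-witness, then there is a `c`-witness `π'` with
`cost₁ π' = +∞` or `cost₁ π' ≤ 2·|V|·W`, where `W` bounds all edge weights. -/
theorem cwitness_bound {V : Type*} [Fintype V] (E : V → V → Prop)
    (hE : ∀ u, ∃ v, E u v) (V0 : Set V) (v0 : V)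
    (w0 w1 : V → V → ℕ) (T0 T1 : Set V) (W : ℕ)
    (hW0 : ∀ u v, E u v → w0 u v ≤ W) (hW1 : ∀ u v, E u v → w1 u v ≤ W) (c : ℕ)
    (h : ∃ π : ℕ → V, IsCWitness E V0 v0 w0 w1 T0 T1 c π) :
    ∃ π' : ℕ → V, IsCWitness E V0 v0 w0 w1 T0 T1 c π' ∧
      (cost w1 T1 π' = ⊤ ∨ cost w1 T1 π' ≤ (2 * Fintype.card V * W : ℕ)) :=
  cwitness_bound_general E V0 v0 w0 w1 T0 T1 W hW1 c h
end

section
/- In the Pareto setting with initial vertex v_0, for every strategy σ_0 of player 0 and every play π from v_0 consistent with σ_0, there exists a σ_0-fixed Pareto-optimal play π′ consistent with σ_0 such that pay(π′) ≤ pay(π) componentwise. Consequently, the set C_{σ_0} of minimal payoffs of plays consistent with σ_0 is a nonempty antichain for the componentwise order on (ℕ∪{+∞})^t. -/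
open scoped Classical

/-- `π` is a lasso `μ (ν)^ω` where `|μ| = a` and `|ν| = b`. -/
def IsLasso {V : Type*} (π : ℕ → V) (a b : ℕ) : Prop :=
  0 < b ∧ ∀ k, a ≤ k → π (k + b) = π k

/-- The payoff of a play: the tuple of the `t` environment costs, with the
componentwise partial order. -/
noncomputable def pay {V : Type*} {t : ℕ} (w : Fin t → V → V → ℕ) (T : Fin t → Set V)
    (π : ℕ → V) : Fin t → ℕ∞ :=
  fun i => cost (w i) (T i) π

/-- `π` is `σ0`-fixed Pareto-optimal: no play from `v0` consistent with `σ0` has a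
strictly smaller payoff. -/
def ParetoOptimal {V : Type*} {t : ℕ} (E : V → V → Prop) (V0 : Set V) (v0 : V)
    (w : Fin t → V → V → ℕ) (T : Fin t → Set V) (σ0 : List V → V) (π : ℕ → V) : Prop :=
  ¬ ∃ π', IsPlay E π' ∧ π' 0 = v0 ∧ PlayConsistent V0 σ0 π' ∧ pay w T π' < pay w T π

/-!
The componentwise order on `Fin t → ℕ∞` is well-founded, so the payoff of every play
consistent with `σ0` lies above a minimal payoff of such a play, and the minimal elements of
any set form an antichain. Nonemptiness needs one consistent play, obtained by letting player 0
follow `σ0` and the environment take arbitrary edges.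
-/

section Plays

variable {V : Type*}

lemma histList_eq_append (π : ℕ → V) (n : ℕ) :
    histList π n = (List.range n).map π ++ [π n] := by
  simp [histList, List.range_succ]

lemma histList_succ (π : ℕ → V) (n : ℕ) :
    histList π (n + 1) = histList π n ++ [π (n + 1)] := by
  simp [histList, List.range_succ]

lemma isChain_histList {E : V → V → Prop} {π : ℕ → V} {n : ℕ}
    (h : ∀ m < n, E (π m) (π (m + 1))) : List.IsChain E (histList π n) := by
  rw [histList, List.isChain_map, List.isChain_range_succ]
  exact h

lemma exists_seq_succ_eq_histList (v0 : V) (f : List V → V) :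
    ∃ π : ℕ → V, π 0 = v0 ∧ ∀ n, π (n + 1) = f (histList π n) := by
  let hist : ℕ → List V := fun n => Nat.rec [v0] (fun _ l => l ++ [f l]) n
  let π : ℕ → V := fun n => (hist n).getLastD v0
  have hist_eq : ∀ n, hist n = histList π n := by
    intro n
    induction n with
    | zero => rfl
    | succ n ih =>
      rw [histList_succ, ← ih]
      simp [π, hist]
  exact ⟨π, rfl, fun n => by rw [← hist_eq]; simp [π, hist]⟩

lemma IsStrategy.exists_play {E : V → V → Prop} (hE : ∀ u, ∃ v, E u v) {V0 : Set V}
    {σ0 : List V → V} (hσ0 : IsStrategy E V0 σ0) (v0 : V) :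
    ∃ π : ℕ → V, IsPlay E π ∧ π 0 = v0 ∧ PlayConsistent V0 σ0 π := by
  choose next hnext using hE
  obtain ⟨π, hπ0, hπ⟩ := exists_seq_succ_eq_histList v0
    (fun l => if l.getLastD v0 ∈ V0 then σ0 l else next (l.getLastD v0))
  have hlast : ∀ n, (histList π n).getLastD v0 = π n := by
    simp [histList_eq_append]
  have hstep : ∀ n, π (n + 1) = if π n ∈ V0 then σ0 (histList π n) else next (π n) := by
    intro n
    rw [hπ, hlast]
  refine ⟨π, fun n => ?_, hπ0, fun n hn => by rw [hstep, if_pos hn]⟩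
  induction n using Nat.strong_induction_on with
  | _ n ih =>
    rw [hstep]
    split_ifs with hn
    · have hchain := isChain_histList ih
      rw [histList_eq_append] at hchain ⊢
      exact hσ0 _ _ hchain hn
    · exact hnext (π n)

end Plays

section Pareto

variable {V : Type*} {t : ℕ} (E : V → V → Prop) (V0 : Set V) (v0 : V)
  (w : Fin t → V → V → ℕ) (T : Fin t → Set V) (σ0 : List V → V)

def consistentPayoffs : Set (Fin t → ℕ∞) :=
  {p | ∃ π : ℕ → V, IsPlay E π ∧ π 0 = v0 ∧ PlayConsistent V0 σ0 π ∧ pay w T π = p}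

variable {E V0 v0 w T σ0}

lemma paretoOptimal_iff_minimal {π : ℕ → V}
    (hπ : pay w T π ∈ consistentPayoffs E V0 v0 w T σ0) :
    ParetoOptimal E V0 v0 w T σ0 π ↔
      Minimal (· ∈ consistentPayoffs E V0 v0 w T σ0) (pay w T π) := by
  rw [minimal_iff_forall_lt, ParetoOptimal]
  constructor
  · intro hopt
    refine ⟨hπ, ?_⟩
    rintro _ hlt ⟨π', hplay, h0, hcons, rfl⟩
    exact hopt ⟨π', hplay, h0, hcons, hlt⟩
  · rintro ⟨-, hmin⟩ ⟨π', hplay, h0, hcons, hlt⟩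
    exact hmin hlt ⟨π', hplay, h0, hcons, rfl⟩

lemma setOf_pay_paretoOptimal_eq :
    {p : Fin t → ℕ∞ | ∃ π : ℕ → V, IsPlay E π ∧ π 0 = v0 ∧
        PlayConsistent V0 σ0 π ∧ ParetoOptimal E V0 v0 w T σ0 π ∧ pay w T π = p} =
      {p | Minimal (· ∈ consistentPayoffs E V0 v0 w T σ0) p} := by
  ext p
  constructor
  · rintro ⟨π, hplay, h0, hcons, hopt, rfl⟩
    exact (paretoOptimal_iff_minimal ⟨π, hplay, h0, hcons, rfl⟩).mp hopt
  · intro hmin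
    obtain ⟨π, hplay, h0, hcons, rfl⟩ := hmin.prop
    exact ⟨π, hplay, h0, hcons, (paretoOptimal_iff_minimal hmin.prop).mpr hmin, rfl⟩

lemma exists_paretoOptimal_pay_le {π : ℕ → V} (hplay : IsPlay E π) (h0 : π 0 = v0)
    (hcons : PlayConsistent V0 σ0 π) :
    ∃ π' : ℕ → V, IsPlay E π' ∧ π' 0 = v0 ∧ PlayConsistent V0 σ0 π' ∧
      ParetoOptimal E V0 v0 w T σ0 π' ∧ pay w T π' ≤ pay w T π := by
  obtain ⟨p, hle, hmin⟩ := exists_minimal_le_of_wellFoundedLT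
    (· ∈ consistentPayoffs E V0 v0 w T σ0) _ ⟨π, hplay, h0, hcons, rfl⟩
  obtain ⟨π', hplay', h0', hcons', rfl⟩ := hmin.prop
  exact ⟨π', hplay', h0', hcons', (paretoOptimal_iff_minimal hmin.prop).mpr hmin, hle⟩

end Pareto

theorem pareto_optimal_exists_and_antichain_general {V : Type*}
    (E : V → V → Prop) (hE : ∀ u, ∃ v, E u v) (V0 : Set V) (v0 : V) (t : ℕ)
    (w : Fin t → V → V → ℕ) (T : Fin t → Set V)
    (σ0 : List V → V) (hσ0 : IsStrategy E V0 σ0) :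
    (∀ π : ℕ → V, IsPlay E π → π 0 = v0 → PlayConsistent V0 σ0 π →
      ∃ π' : ℕ → V, IsPlay E π' ∧ π' 0 = v0 ∧ PlayConsistent V0 σ0 π' ∧
        ParetoOptimal E V0 v0 w T σ0 π' ∧ pay w T π' ≤ pay w T π) ∧
    ({p : Fin t → ℕ∞ | ∃ π : ℕ → V, IsPlay E π ∧ π 0 = v0 ∧
        PlayConsistent V0 σ0 π ∧ ParetoOptimal E V0 v0 w T σ0 π ∧
        pay w T π = p}.Nonempty ∧
      IsAntichain (· ≤ ·) {p : Fin t → ℕ∞ | ∃ π : ℕ → V, IsPlay E π ∧ π 0 = v0 ∧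
        PlayConsistent V0 σ0 π ∧ ParetoOptimal E V0 v0 w T σ0 π ∧
        pay w T π = p}) := by
  refine ⟨fun π => exists_paretoOptimal_pay_le, ?_, ?_⟩
  · obtain ⟨π, hplay, h0, hcons⟩ := hσ0.exists_play hE v0
    obtain ⟨π', hplay', h0', hcons', hopt, -⟩ :=
      exists_paretoOptimal_pay_le (w := w) (T := T) hplay h0 hcons
    exact ⟨_, π', hplay', h0', hcons', hopt, rfl⟩
  · rw [setOf_pay_paretoOptimal_eq]
    exact setOfPred_minimal_antichain _

/-- For every strategy `σ0` of player 0 and every play `π` from `v0` consistent with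
`σ0`, there is a `σ0`-fixed Pareto-optimal play `π'` consistent with `σ0` with
`pay π' ≤ pay π` componentwise; consequently, the set `C_{σ0}` of minimal payoffs of
plays consistent with `σ0` is a nonempty antichain for the componentwise order. -/
theorem pareto_optimal_exists_and_antichain {V : Type*} [Fintype V]
    (E : V → V → Prop) (hE : ∀ u, ∃ v, E u v) (V0 : Set V) (v0 : V) (t : ℕ)
    (w0 : V → V → ℕ) (T0 : Set V) (w : Fin t → V → V → ℕ) (T : Fin t → Set V)
    (σ0 : List V → V) (hσ0 : IsStrategy E V0 σ0) :
    (∀ π : ℕ → V, IsPlay E π → π 0 = v0 → PlayConsistent V0 σ0 π →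
      ∃ π' : ℕ → V, IsPlay E π' ∧ π' 0 = v0 ∧ PlayConsistent V0 σ0 π' ∧
        ParetoOptimal E V0 v0 w T σ0 π' ∧ pay w T π' ≤ pay w T π) ∧
    ({p : Fin t → ℕ∞ | ∃ π : ℕ → V, IsPlay E π ∧ π 0 = v0 ∧
        PlayConsistent V0 σ0 π ∧ ParetoOptimal E V0 v0 w T σ0 π ∧
        pay w T π = p}.Nonempty ∧
      IsAntichain (· ≤ ·) {p : Fin t → ℕ∞ | ∃ π : ℕ → V, IsPlay E π ∧ π 0 = v0 ∧
        PlayConsistent V0 σ0 π ∧ ParetoOptimal E V0 v0 w T σ0 π ∧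
        pay w T π = p}) :=
  pareto_optimal_exists_and_antichain_general E hE V0 v0 t w T σ0 hσ0
end
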